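/- For odd n ≥ 2, the adjacency matrix of BCay(Q_{4n}, {1, a, b}) has eigenvalue 1 with multiplicity 3, while the adjacency matrix of BCay(Q_{4n}, {1, a², b}) has eigenvalue 1 with multiplicity 1. -/

import Mathlib

/-- The bi-Cayley graph `BCay(G,S)`. -/
def BCay (G : Type*) [Group G] (S : Set G) : SimpleGraph (G × Bool) :=
  SimpleGraph.fromRel (fun u v => u.2 = false ∧ v.2 = true ∧ ∃ s ∈ S, v.1 = s * u.1)

/-- The complex adjacency matrix of the bi-Cayley graph `BCay(Q_{4n}, S)`. -/
noncomputable def bcayAdjMatrix (n : ℕ) [NeZero n] (S : Set (QuaternionGroup n)) :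
    Matrix (QuaternionGroup n × Bool) (QuaternionGroup n × Bool) ℂ :=
  letI := Classical.decRel (BCay (QuaternionGroup n) S).Adj
  SimpleGraph.adjMatrix ℂ (BCay (QuaternionGroup n) S)

set_option linter.unusedSectionVars false
set_option linter.unusedVariables false

open Polynomial Matrix Module
open scoped ComplexOrder

variable {N : Type*} [Fintype N] [DecidableEq N]

lemma charpoly_conj_aux (V W M : Matrix N N ℂ) (hVW : V * W = 1) (hWV : W * V = 1) :
    (V * M * W).charpoly = M.charpoly := by
  unfold Matrix.charpoly
  have hcomm : ∀ P : Matrix N N ℂ[X], (Matrix.scalar N) (X : ℂ[X]) * P = P * (Matrix.scalar N) (X : ℂ[X]) :=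
    fun P => (Matrix.scalar_commute (X : ℂ[X]) (fun r' => Commute.all _ _) P).eq
  have hch : charmatrix (V * M * W) = (V.map C) * charmatrix M * (W.map C) := by
    rw [charmatrix, charmatrix, mul_sub, sub_mul]
    congr 1
    · symm
      calc V.map C * (Matrix.scalar N) (X : ℂ[X]) * W.map C
          = (Matrix.scalar N) (X : ℂ[X]) * (V.map C * W.map C) := by
            rw [← hcomm (V.map C), mul_assoc]
        _ = (Matrix.scalar N) (X : ℂ[X]) := by rw [← Matrix.map_mul, hVW]; simp
    · simp only [RingHom.mapMatrix_apply]
      rw [← Matrix.map_mul, ← Matrix.map_mul]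
  rw [hch, det_mul, det_mul]
  have : (V.map C).det * M.charmatrix.det * (W.map C).det
      = ((V.map C).det * (W.map C).det) * M.charmatrix.det := by ring
  rw [this, ← det_mul, ← Matrix.map_mul, hVW]
  simp

lemma charpoly_diagonal (d : N → ℂ) :
    (diagonal d).charpoly = ∏ i, ((X : ℂ[X]) - C (d i)) := by
  have h : charmatrix (diagonal d) = diagonal (fun i => (X : ℂ[X]) - C (d i)) := by
    ext i j
    by_cases h : i = j
    · subst h; simp [charmatrix_apply_eq]
    · simp [charmatrix_apply_ne _ _ _ h, diagonal_apply_ne _ h]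
  rw [Matrix.charpoly, h, det_diagonal]

omit [DecidableEq N] in
lemma rootMultiplicity_prod_X_sub_C (d : N → ℂ) (t : ℂ) :
    (∏ i, ((X : ℂ[X]) - C (d i))).rootMultiplicity t
      = Multiset.card (Multiset.filter (fun a => t = d a) Finset.univ.val) := by
  classical
  have h1 : (∏ i, ((X : ℂ[X]) - C (d i)))
      = (Multiset.map (fun a => (X : ℂ[X]) - C a) (Finset.univ.val.map d)).prod := by
    rw [Multiset.map_map]
    rfl
  rw [← Polynomial.count_roots, h1, Polynomial.roots_multiset_prod_X_sub_C,
    Multiset.count_map]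

lemma herm_ker_sq (B : Matrix N N ℂ) (hB : B.IsHermitian) (x : N → ℂ)
    (hx : B *ᵥ (B *ᵥ x) = 0) : B *ᵥ x = 0 := by
  have h : star (B *ᵥ x) ⬝ᵥ (B *ᵥ x) = 0 := by
    rw [Matrix.star_mulVec, ← Matrix.dotProduct_mulVec, hB.eq, hx]
    simp [dotProduct]
  exact dotProduct_star_self_eq_zero.mp h

lemma herm_maxGen_eq_ker (B : Matrix N N ℂ) (hB : B.IsHermitian) :
    Module.End.maxGenEigenspace (Matrix.toLin' B : Module.End ℂ (N → ℂ)) 0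
      = LinearMap.ker (Matrix.toLin' B) := by
  set φ : Module.End ℂ (N → ℂ) := Matrix.toLin' B with hφ
  apply le_antisymm
  · intro x hx
    rw [Module.End.mem_maxGenEigenspace] at hx
    obtain ⟨k, hk⟩ := hx
    simp only [zero_smul, sub_zero] at hk
    rw [LinearMap.mem_ker]
    have key : ∀ k (x : N → ℂ), (φ ^ (k+1)) x = 0 → φ x = 0 := by
      intro k
      induction k with
      | zero => intro x h; simpa using h
      | succ k ih =>
        intro x h
        have h2 : (φ ^ (k+1)) (φ x) = 0 := by
          rw [← Module.End.mul_apply, ← pow_succ]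
          exact h
        have h3 := ih _ h2
        simp only [hφ, Matrix.toLin'_apply] at h3 ⊢
        exact herm_ker_sq B hB x h3
    rcases k with _ | k
    · simp only [pow_zero, Module.End.one_apply] at hk
      rw [hk]; simp
    · exact key k x hk
  · intro x hx
    rw [Module.End.mem_maxGenEigenspace]
    exact ⟨1, by simpa using hx⟩

/-- Main glue: algebraic multiplicity of eigenvalue 1 equals kernel dimension of M - 1. -/
lemma herm_mult_one (M : Matrix N N ℂ) (hM : M.IsHermitian) :
    M.charpoly.rootMultiplicity 1 = finrank ℂ (LinearMap.ker (Matrix.toLin' (M - 1))) := by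
  classical
  set B := M - 1 with hBdef
  have hB : B.IsHermitian := hM.sub Matrix.isHermitian_one
  set U : Matrix N N ℂ := (hM.eigenvectorUnitary : Matrix N N ℂ) with hU
  have hUW : U * star U = 1 := (Matrix.mem_unitaryGroup_iff).mp hM.eigenvectorUnitary.2
  have hWU : star U * U = 1 := (Matrix.mem_unitaryGroup_iff').mp hM.eigenvectorUnitary.2
  have hMspec : M = U * diagonal (RCLike.ofReal ∘ hM.eigenvalues) * star U :=
    hM.spectral_theorem
  have hdiag : diagonal (fun i => (hM.eigenvalues i : ℂ) - 1)
      = diagonal (RCLike.ofReal ∘ hM.eigenvalues) - 1 := by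
    rw [← Matrix.diagonal_one, ← Matrix.diagonal_sub]
    rfl
  have hBspec : B = U * diagonal (fun i => (hM.eigenvalues i : ℂ) - 1) * star U := by
    rw [hdiag]
    calc B = U * diagonal (RCLike.ofReal ∘ hM.eigenvalues) * star U - U * 1 * star U := by
            rw [mul_one, hUW, ← hMspec, hBdef]
      _ = U * (diagonal (RCLike.ofReal ∘ hM.eigenvalues) - 1) * star U := by
            rw [Matrix.mul_sub, Matrix.sub_mul]
  have hMc : M.charpoly.rootMultiplicity 1
      = Multiset.card (Multiset.filter (fun a => (1:ℂ) = (hM.eigenvalues a : ℂ)) Finset.univ.val) := by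
    conv_lhs => rw [hMspec]
    rw [charpoly_conj_aux U (star U) _ hUW hWU, _root_.charpoly_diagonal]
    exact rootMultiplicity_prod_X_sub_C _ 1
  have hBc : B.charpoly.rootMultiplicity 0
      = Multiset.card (Multiset.filter (fun a => (0:ℂ) = (hM.eigenvalues a : ℂ) - 1) Finset.univ.val) := by
    conv_lhs => rw [hBspec]
    rw [charpoly_conj_aux U (star U) _ hUW hWU, _root_.charpoly_diagonal]
    exact rootMultiplicity_prod_X_sub_C _ 0
  have hcount : M.charpoly.rootMultiplicity 1 = B.charpoly.rootMultiplicity 0 := by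
    rw [hMc, hBc]
    congr 1
    apply Multiset.filter_congr
    intro a _
    constructor
    · intro h; rw [← h]; ring
    · intro h; linear_combination h
  rw [hcount, rootMultiplicity_eq_natTrailingDegree']
  have hcp : B.charpoly = LinearMap.charpoly (Matrix.toLin' B : Module.End ℂ (N → ℂ)) := by
    rw [← LinearMap.charpoly_toMatrix (Matrix.toLin' B : Module.End ℂ (N → ℂ)) (Pi.basisFun ℂ N),
      LinearMap.toMatrix_eq_toMatrix', LinearMap.toMatrix'_toLin']
  rw [hcp, ← LinearMap.finrank_maxGenEigenspace_zero_eq, herm_maxGen_eq_ker B hB]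


namespace BCayAux

variable {n : ℕ} [NeZero n]

instance : NeZero (2 * n) := ⟨fun h => (NeZero.ne n) (by omega)⟩

/-- The sign character on `ZMod (2*n)`. -/
noncomputable def qchi (n : ℕ) (i : ZMod (2*n)) : ℂ := (-1)^(i.val)

lemma cast_val (i : ZMod (2*n)) : ((i.val : ℕ) : ZMod (2*n)) = i :=
  ZMod.natCast_rightInverse i

lemma neg_one_pow_mod (x : ℕ) : ((-1:ℂ))^(x % (2*n)) = (-1)^x := by
  conv_rhs => rw [← Nat.div_add_mod x (2*n)]
  rw [pow_add, pow_mul]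
  have h1 : ((-1:ℂ))^(2*n) = 1 := by rw [pow_mul]; norm_num
  rw [h1, one_pow, one_mul]

lemma qchi_natCast (k : ℕ) : qchi n (k : ZMod (2*n)) = (-1)^k := by
  rw [qchi, ZMod.val_natCast, neg_one_pow_mod]

lemma qchi_apply (i : ZMod (2*n)) : qchi n i = (-1)^(i.val) := rfl

lemma qchi_add (i j : ZMod (2*n)) : qchi n (i + j) = qchi n i * qchi n j := by
  rw [qchi, qchi, qchi, ZMod.val_add, neg_one_pow_mod, pow_add]

lemma qchi_one : qchi n (1 : ZMod (2*n)) = -1 := by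
  rw [← Nat.cast_one, qchi_natCast]; norm_num

lemma qchi_two : qchi n (2 : ZMod (2*n)) = 1 := by
  rw [← Nat.cast_ofNat, qchi_natCast]; norm_num

lemma qchi_add_one (i : ZMod (2*n)) : qchi n (i + 1) = -qchi n i := by
  rw [qchi_add, qchi_one]; ring

lemma qchi_sub_one (i : ZMod (2*n)) : qchi n (i - 1) = -qchi n i := by
  have := qchi_add_one (n := n) (i - 1)
  rw [sub_add_cancel] at this
  linear_combination this

lemma qchi_add_two (i : ZMod (2*n)) : qchi n (i + 2) = qchi n i := by
  rw [qchi_add, qchi_two]; ring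

lemma qchi_sub_two (i : ZMod (2*n)) : qchi n (i - 2) = qchi n i := by
  have := qchi_add_two (n := n) (i - 2)
  rw [sub_add_cancel] at this
  linear_combination -this

lemma qchi_add_n (hodd : Odd n) (i : ZMod (2*n)) : qchi n (i + (n : ZMod (2*n))) = -qchi n i := by
  rw [qchi_add]
  have h : qchi n ((n : ℕ) : ZMod (2*n)) = -1 := by rw [qchi_natCast, hodd.neg_one_pow]
  rw [h]; ring

lemma qchi_zero : qchi n (0 : ZMod (2*n)) = 1 := by
  rw [← Nat.cast_zero, qchi_natCast]; norm_num

lemma hnn : ((n : ZMod (2*n)) + (n : ZMod (2*n)) : ZMod (2*n)) = 0 := by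
  have : (((n + n : ℕ)) : ZMod (2*n)) = 0 := by
    rw [show n + n = 2*n from by ring, ZMod.natCast_self]
  push_cast at this
  exact this

/-- solution of the antiperiodic recurrence with step 1 -/
lemma alt_solve (f : ZMod (2*n) → ℂ) (h : ∀ i, f i + f (i+1) = 0) :
    ∀ i, f i = qchi n i * f 0 := by
  have key : ∀ k : ℕ, f (k : ZMod (2*n)) = (-1)^k * f 0 := by
    intro k
    induction k with
    | zero => simp
    | succ k ih =>
      have hc : ((k+1 : ℕ) : ZMod (2*n)) = (k : ZMod (2*n)) + 1 := by push_cast; ring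
      rw [hc, pow_succ]
      linear_combination h (k : ZMod (2*n)) - ih
  intro i
  have := key i.val
  rwa [cast_val, ← qchi_apply] at this

/-- a step-2 antiperiodic function on `ZMod (2*n)` with `n` odd vanishes -/
lemma alt2_solve (hodd : Odd n) (f : ZMod (2*n) → ℂ) (h : ∀ i, f i + f (i+2) = 0) :
    ∀ i, f i = 0 := by
  have key : ∀ (k : ℕ) (i : ZMod (2*n)), f (i + ((2*k : ℕ) : ZMod (2*n))) = (-1)^k * f i := by
    intro k
    induction k with
    | zero => intro i; simp
    | succ k ih =>
      intro i
      have hc : i + ((2*(k+1) : ℕ) : ZMod (2*n)) = (i + ((2*k : ℕ) : ZMod (2*n))) + 2 := by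
        push_cast; ring
      rw [hc, pow_succ]
      linear_combination h (i + ((2*k : ℕ) : ZMod (2*n))) - ih i
  intro i
  have := key n i
  rw [ZMod.natCast_self, add_zero, hodd.neg_one_pow] at this
  linear_combination this / 2

/-- discrete harmonic (step 1) with period n implies constant -/
lemma arith1_const (f : ZMod (2*n) → ℂ) (N' : ZMod (2*n)) (hN' : N' = (n : ZMod (2*n)))
    (h : ∀ i, f (i+1) - f i = f i - f (i-1))
    (hper : ∀ i, f (i + N') = f i) :
    ∀ i, f i = f 0 := by
  have hstep : ∀ i : ZMod (2*n), f (i+1) - f i = f 1 - f 0 := by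
    have hg : ∀ i : ZMod (2*n), f (i+1+1) - f (i+1) = f (i+1) - f i := by
      intro i
      have := h (i+1)
      rwa [show i+1-1 = i from by ring] at this
    have key : ∀ k : ℕ, f ((k : ZMod (2*n))+1) - f (k : ZMod (2*n)) = f 1 - f 0 := by
      intro k
      induction k with
      | zero => simp
      | succ k ih =>
        have hc : ((k+1 : ℕ) : ZMod (2*n)) = (k : ZMod (2*n)) + 1 := by push_cast; ring
        rw [hc]
        rw [hg (k : ZMod (2*n))]
        exact ih
    intro i
    have := key i.val
    rwa [cast_val] at this
  have key : ∀ k : ℕ, f (k : ZMod (2*n)) = f 0 + k * (f 1 - f 0) := by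
    intro k
    induction k with
    | zero => simp
    | succ k ih =>
      have hc : ((k+1 : ℕ) : ZMod (2*n)) = (k : ZMod (2*n)) + 1 := by push_cast; ring
      rw [hc]
      push_cast
      linear_combination hstep (k : ZMod (2*n)) + ih
  have hn0 : f ((n : ℕ) : ZMod (2*n)) = f 0 := by
    have := hper 0
    rwa [zero_add, hN'] at this
  have hd : (n : ℂ) * (f 1 - f 0) = 0 := by
    have := key n
    rw [hn0] at this
    linear_combination -this
  have hδ : f 1 - f 0 = 0 := by
    rcases mul_eq_zero.mp hd with h' | h'
    · exact absurd h' (Nat.cast_ne_zero.mpr (NeZero.ne n))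
    · exact h'
  intro i
  have := key i.val
  rw [cast_val, hδ] at this
  simpa using this

/-- discrete harmonic (step 2) with period n, n odd, implies constant -/
lemma arith2_const (hodd : Odd n) (f : ZMod (2*n) → ℂ) (N' : ZMod (2*n))
    (hN' : N' = (n : ZMod (2*n)))
    (h : ∀ i, f (i+2) - f i = f i - f (i-2))
    (hper : ∀ i, f (i + N') = f i) :
    ∀ i, f i = f 0 := by
  have hg : ∀ i : ZMod (2*n), f (i+2+2) - f (i+2) = f (i+2) - f i := by
    intro i
    have := h (i+2)
    rwa [show i+2-2 = i from by ring] at this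
  have key : ∀ (k : ℕ) (i : ZMod (2*n)),
      f (i + ((2*k : ℕ) : ZMod (2*n))) = f i + k * (f (i+2) - f i)
      ∧ f ((i + ((2*k : ℕ) : ZMod (2*n))) + 2) - f (i + ((2*k : ℕ) : ZMod (2*n))) = f (i+2) - f i := by
    intro k
    induction k with
    | zero => intro i; constructor <;> simp
    | succ k ih =>
      intro i
      obtain ⟨ih1, ih2⟩ := ih i
      have hc : i + ((2*(k+1) : ℕ) : ZMod (2*n)) = (i + ((2*k : ℕ) : ZMod (2*n))) + 2 := by
        push_cast; ring
      constructor
      · rw [hc]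
        have hk1 : ((k+1:ℕ):ℂ) = (k:ℂ)+1 := by push_cast; ring
        rw [hk1]
        linear_combination ih2 + ih1
      · rw [hc]
        rw [hg (i + ((2*k : ℕ) : ZMod (2*n)))]
        exact ih2
  have hδ0 : ∀ i : ZMod (2*n), f (i+2) - f i = 0 := by
    intro i
    have := (key n i).1
    rw [ZMod.natCast_self, add_zero] at this
    have hd : (n : ℂ) * (f (i+2) - f i) = 0 := by linear_combination -this
    rcases mul_eq_zero.mp hd with h' | h'
    · exact absurd h' (Nat.cast_ne_zero.mpr (NeZero.ne n))
    · exact h'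
  have hstep2 : ∀ (k : ℕ) (i : ZMod (2*n)), f (i + ((2*k : ℕ) : ZMod (2*n))) = f i := by
    intro k i
    have := (key k i).1
    rw [hδ0 i] at this
    simpa using this
  obtain ⟨t, ht⟩ := hodd
  have hstep1 : ∀ i : ZMod (2*n), f (i + 1) = f i := by
    intro i
    have h1 : f (i + 1 + ((2*t : ℕ) : ZMod (2*n))) = f (i+1) := hstep2 t (i+1)
    have hc : i + 1 + ((2*t : ℕ) : ZMod (2*n)) = i + N' := by
      have h2 : ((n:ℕ) : ZMod (2*n)) = ((2*t+1 : ℕ) : ZMod (2*n)) := by rw [← ht]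
      rw [hN', h2]; push_cast; ring
    rw [hc, hper i] at h1
    exact h1.symm
  have key2 : ∀ k : ℕ, f (k : ZMod (2*n)) = f 0 := by
    intro k
    induction k with
    | zero => simp
    | succ k ih =>
      have hc : ((k+1 : ℕ) : ZMod (2*n)) = (k : ZMod (2*n)) + 1 := by push_cast; ring
      rw [hc, hstep1, ih]
  intro i
  have := key2 i.val
  rwa [cast_val] at this

/-- solve f(i+1) = c + chi(i) d - f(i) on ZMod (2n) -/
lemma urec1 (f : ZMod (2*n) → ℂ) (c d : ℂ)
    (h : ∀ i, f (i+1) = c + qchi n i * d - f i) :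
    ∀ i, f i = qchi n i * (f 0 - c/2) + c/2 := by
  have key : ∀ k : ℕ, f (k : ZMod (2*n))
      = (-1)^k * (f 0 - c/2) + c/2 + k * (-1)^(k+1) * d := by
    intro k
    induction k with
    | zero => norm_num
    | succ k ih =>
      have hc : ((k+1 : ℕ) : ZMod (2*n)) = (k : ZMod (2*n)) + 1 := by push_cast; ring
      rw [hc]
      have hk := h (k : ZMod (2*n))
      rw [qchi_natCast] at hk
      push_cast
      rw [pow_succ, pow_succ]
      linear_combination hk - ih
  have hd : d = 0 := by
    have h2n := key (2*n)
    rw [ZMod.natCast_self] at h2n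
    have he : ((-1:ℂ))^(2*n) = 1 := by rw [pow_mul]; norm_num
    have he2 : ((-1:ℂ))^(2*n+1) = -1 := by rw [pow_succ, he]; ring
    rw [he, he2] at h2n
    have hn2 : ((2*n : ℕ) : ℂ) ≠ 0 := by
      simp only [Nat.cast_ne_zero]
      have := NeZero.ne n; omega
    have : ((2*n : ℕ) : ℂ) * d = 0 := by
      linear_combination h2n
    exact (mul_eq_zero.mp this).resolve_left hn2
  intro i
  have := key i.val
  rw [cast_val, hd] at this
  rw [qchi_apply]
  linear_combination this

/-- solve f(i+2) = c - f(i) on ZMod (2n), n odd -/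
lemma urec2 (hodd : Odd n) (f : ZMod (2*n) → ℂ) (c : ℂ)
    (h : ∀ i, f (i+2) = c - f i) :
    ∀ i, f i = c/2 := by
  have := alt2_solve hodd (fun i => f i - c/2) (by
    intro i
    linear_combination h i)
  intro i
  have h2 := this i
  linear_combination h2


section Solvers

lemma case1_solve (hodd : Odd n) (u1 u2 : ZMod (2*n) → ℂ)
    (E1 : ∀ i, u1 (i-1) + 2*u1 i + u1 (i+1) + u2 i + u2 (i+1)
      + u2 (i + (n : ZMod (2*n))) + u2 (i + (n : ZMod (2*n)) + 1) = 0)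
    (E2 : ∀ i, 2*u2 i + u2 (i+1) + u2 (i-1) + u1 i + u1 (i-1)
      + u1 (i + (n : ZMod (2*n))) + u1 (i + (n : ZMod (2*n)) - 1) = 0) :
    ∃ A B C : ℂ, (∀ i, u1 i = A * qchi n i + C) ∧ (∀ i, u2 i = B * qchi n i - C) := by
  set N : ZMod (2*n) := (n : ZMod (2*n)) with hN
  have I1 : ∀ i : ZMod (2*n), i + 1 - 1 = i := fun i => by ring
  have I2 : ∀ i : ZMod (2*n), i - 1 + 1 = i := fun i => by ring
  have I3 : ∀ i : ZMod (2*n), i + N + N = i := fun i => by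
    rw [add_assoc, hN, hnn, add_zero]
  have I4 : ∀ i : ZMod (2*n), i + 1 + N = i + N + 1 := fun i => by ring
  have I5 : ∀ i : ZMod (2*n), i - 1 + N = i + N - 1 := fun i => by ring
  -- shifted equations
  have E1' : ∀ i, u1 (i+N-1) + 2*u1 (i+N) + u1 (i+N+1) + u2 (i+N) + u2 (i+N+1)
      + u2 i + u2 (i+1) = 0 := by
    intro i
    have h := E1 (i + N)
    simp only [I1, I2, I3, I4, I5] at h
    exact h
  have E2' : ∀ i, 2*u2 (i+N) + u2 (i+N+1) + u2 (i+N-1) + u1 (i+N) + u1 (i+N-1)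
      + u1 i + u1 (i-1) = 0 := by
    intro i
    have h := E2 (i + N)
    simp only [I1, I2, I3, I4, I5] at h
    exact h
  -- constancy of the periodized sum P1
  have hP1 : ∀ i : ZMod (2*n), u1 i + u1 (i+1) + u1 (i+N) + u1 (i+N+1)
      = u1 0 + u1 1 + u1 N + u1 (N+1) := by
    have harm : ∀ i : ZMod (2*n),
        (fun j => u1 j + u1 (j+1) + u1 (j+N) + u1 (j+N+1)) (i+1)
          - (fun j => u1 j + u1 (j+1) + u1 (j+N) + u1 (j+N+1)) i
        = (fun j => u1 j + u1 (j+1) + u1 (j+N) + u1 (j+N+1)) i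
          - (fun j => u1 j + u1 (j+1) + u1 (j+N) + u1 (j+N+1)) (i-1) := by
      intro i
      simp only [I1, I2, I3, I4, I5]
      have a1 := E1 i
      have a2 := E1' i
      have a3 := E1 (i+1); simp only [I1, I2, I3, I4, I5] at a3
      have a4 := E1' (i+1); simp only [I1, I2, I3, I4, I5] at a4
      have a5 := E2 (i+1); simp only [I1, I2, I3, I4, I5] at a5
      have a6 := E2' (i+1); simp only [I1, I2, I3, I4, I5] at a6
      linear_combination a1 + a2 + a3 + a4 - 2*a5 - 2*a6
    have hper : ∀ i : ZMod (2*n),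
        (fun j => u1 j + u1 (j+1) + u1 (j+N) + u1 (j+N+1)) (i + N)
          = (fun j => u1 j + u1 (j+1) + u1 (j+N) + u1 (j+N+1)) i := by
      intro i
      simp only [I1, I2, I3, I4, I5]
      ring
    intro i
    have h := arith1_const (fun j => u1 j + u1 (j+1) + u1 (j+N) + u1 (j+N+1)) N hN harm hper i
    simp only [zero_add] at h
    exact h
  -- alternating part D1
  have hD1 : ∀ i : ZMod (2*n), u1 i + u1 (i+1) - u1 (i+N) - u1 (i+N+1)
      = qchi n i * (u1 0 + u1 1 - u1 N - u1 (N+1)) := by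
    have halt : ∀ i : ZMod (2*n),
        (fun j => u1 j + u1 (j+1) - u1 (j+N) - u1 (j+N+1)) i
          + (fun j => u1 j + u1 (j+1) - u1 (j+N) - u1 (j+N+1)) (i+1) = 0 := by
      intro i
      simp only [I1, I2, I3, I4, I5]
      have a3 := E1 (i+1); simp only [I1, I2, I3, I4, I5] at a3
      have a4 := E1' (i+1); simp only [I1, I2, I3, I4, I5] at a4
      linear_combination a3 - a4
    intro i
    have h := alt_solve (fun j => u1 j + u1 (j+1) - u1 (j+N) - u1 (j+N+1)) halt i
    simp only [zero_add] at h
    exact h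
  have hD2 : ∀ i : ZMod (2*n), u2 i + u2 (i+1) - u2 (i+N) - u2 (i+N+1)
      = qchi n i * (u2 0 + u2 1 - u2 N - u2 (N+1)) := by
    have halt : ∀ i : ZMod (2*n),
        (fun j => u2 j + u2 (j+1) - u2 (j+N) - u2 (j+N+1)) i
          + (fun j => u2 j + u2 (j+1) - u2 (j+N) - u2 (j+N+1)) (i+1) = 0 := by
      intro i
      simp only [I1, I2, I3, I4, I5]
      have a5 := E2 (i+1); simp only [I1, I2, I3, I4, I5] at a5
      have a6 := E2' (i+1); simp only [I1, I2, I3, I4, I5] at a6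
      linear_combination a5 - a6
    intro i
    have h := alt_solve (fun j => u2 j + u2 (j+1) - u2 (j+N) - u2 (j+N+1)) halt i
    simp only [zero_add] at h
    exact h
  -- solve the two step-1 recurrences
  set p : ℂ := u1 0 + u1 1 + u1 N + u1 (N+1) with hp
  have hu1 : ∀ i, u1 i = qchi n i * (u1 0 - (p/2)/2) + (p/2)/2 := by
    apply urec1 u1 (p/2) ((u1 0 + u1 1 - u1 N - u1 (N+1))/2)
    intro i
    linear_combination (hP1 i)/2 + (hD1 i)/2
  have hu2 : ∀ i, u2 i = qchi n i * (u2 0 - (-p/2)/2) + (-p/2)/2 := by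
    apply urec1 u2 (-p/2) ((u2 0 + u2 1 - u2 N - u2 (N+1))/2)
    intro i
    have a1 := E1 i
    have a2 := E1' i
    have b1 := hP1 i
    have b2 := hP1 (i-1); simp only [I1, I2, I3, I4, I5] at b2
    linear_combination (a1 + a2)/4 - b1/4 - b2/4 + (hD2 i)/2
  refine ⟨u1 0 - p/4, u2 0 + p/4, p/4, fun i => ?_, fun i => ?_⟩
  · have := hu1 i; linear_combination this
  · have := hu2 i; linear_combination this

lemma case2_solve (hodd : Odd n) (u1 u2 : ZMod (2*n) → ℂ)
    (E1 : ∀ i, u1 (i-2) + 2*u1 i + u1 (i+2) + u2 i + u2 (i+2)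
      + u2 (i + (n : ZMod (2*n))) + u2 (i + (n : ZMod (2*n)) + 2) = 0)
    (E2 : ∀ i, 2*u2 i + u2 (i+2) + u2 (i-2) + u1 i + u1 (i-2)
      + u1 (i + (n : ZMod (2*n))) + u1 (i + (n : ZMod (2*n)) - 2) = 0) :
    ∃ C : ℂ, (∀ i, u1 i = C) ∧ (∀ i, u2 i = -C) := by
  set N : ZMod (2*n) := (n : ZMod (2*n)) with hN
  have I1 : ∀ i : ZMod (2*n), i + 2 - 2 = i := fun i => by ring
  have I2 : ∀ i : ZMod (2*n), i - 2 + 2 = i := fun i => by ring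
  have I3 : ∀ i : ZMod (2*n), i + N + N = i := fun i => by
    rw [add_assoc, hN, hnn, add_zero]
  have I4 : ∀ i : ZMod (2*n), i + 2 + N = i + N + 2 := fun i => by ring
  have I5 : ∀ i : ZMod (2*n), i - 2 + N = i + N - 2 := fun i => by ring
  have E1' : ∀ i, u1 (i+N-2) + 2*u1 (i+N) + u1 (i+N+2) + u2 (i+N) + u2 (i+N+2)
      + u2 i + u2 (i+2) = 0 := by
    intro i
    have h := E1 (i + N)
    simp only [I1, I2, I3, I4, I5] at h
    exact h
  have E2' : ∀ i, 2*u2 (i+N) + u2 (i+N+2) + u2 (i+N-2) + u1 (i+N) + u1 (i+N-2)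
      + u1 i + u1 (i-2) = 0 := by
    intro i
    have h := E2 (i + N)
    simp only [I1, I2, I3, I4, I5] at h
    exact h
  have hP1 : ∀ i : ZMod (2*n), u1 i + u1 (i+2) + u1 (i+N) + u1 (i+N+2)
      = u1 0 + u1 2 + u1 N + u1 (N+2) := by
    have harm : ∀ i : ZMod (2*n),
        (fun j => u1 j + u1 (j+2) + u1 (j+N) + u1 (j+N+2)) (i+2)
          - (fun j => u1 j + u1 (j+2) + u1 (j+N) + u1 (j+N+2)) i
        = (fun j => u1 j + u1 (j+2) + u1 (j+N) + u1 (j+N+2)) i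
          - (fun j => u1 j + u1 (j+2) + u1 (j+N) + u1 (j+N+2)) (i-2) := by
      intro i
      simp only [I1, I2, I3, I4, I5]
      have a1 := E1 i
      have a2 := E1' i
      have a3 := E1 (i+2); simp only [I1, I2, I3, I4, I5] at a3
      have a4 := E1' (i+2); simp only [I1, I2, I3, I4, I5] at a4
      have a5 := E2 (i+2); simp only [I1, I2, I3, I4, I5] at a5
      have a6 := E2' (i+2); simp only [I1, I2, I3, I4, I5] at a6
      linear_combination a1 + a2 + a3 + a4 - 2*a5 - 2*a6
    have hper : ∀ i : ZMod (2*n),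
        (fun j => u1 j + u1 (j+2) + u1 (j+N) + u1 (j+N+2)) (i + N)
          = (fun j => u1 j + u1 (j+2) + u1 (j+N) + u1 (j+N+2)) i := by
      intro i
      simp only [I1, I2, I3, I4, I5]
      ring
    intro i
    have h := arith2_const hodd (fun j => u1 j + u1 (j+2) + u1 (j+N) + u1 (j+N+2)) N hN harm hper i
    simp only [zero_add] at h
    exact h
  have hD1 : ∀ i : ZMod (2*n), u1 i + u1 (i+2) - u1 (i+N) - u1 (i+N+2) = 0 := by
    have halt : ∀ i : ZMod (2*n),
        (fun j => u1 j + u1 (j+2) - u1 (j+N) - u1 (j+N+2)) i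
          + (fun j => u1 j + u1 (j+2) - u1 (j+N) - u1 (j+N+2)) (i+2) = 0 := by
      intro i
      simp only [I1, I2, I3, I4, I5]
      have a3 := E1 (i+2); simp only [I1, I2, I3, I4, I5] at a3
      have a4 := E1' (i+2); simp only [I1, I2, I3, I4, I5] at a4
      linear_combination a3 - a4
    intro i
    exact alt2_solve hodd (fun j => u1 j + u1 (j+2) - u1 (j+N) - u1 (j+N+2)) halt i
  have hD2 : ∀ i : ZMod (2*n), u2 i + u2 (i+2) - u2 (i+N) - u2 (i+N+2) = 0 := by
    have halt : ∀ i : ZMod (2*n),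
        (fun j => u2 j + u2 (j+2) - u2 (j+N) - u2 (j+N+2)) i
          + (fun j => u2 j + u2 (j+2) - u2 (j+N) - u2 (j+N+2)) (i+2) = 0 := by
      intro i
      simp only [I1, I2, I3, I4, I5]
      have a5 := E2 (i+2); simp only [I1, I2, I3, I4, I5] at a5
      have a6 := E2' (i+2); simp only [I1, I2, I3, I4, I5] at a6
      linear_combination a5 - a6
    intro i
    exact alt2_solve hodd (fun j => u2 j + u2 (j+2) - u2 (j+N) - u2 (j+N+2)) halt i
  set p : ℂ := u1 0 + u1 2 + u1 N + u1 (N+2) with hp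
  have hu1 : ∀ i, u1 i = (p/2)/2 := by
    apply urec2 hodd u1 (p/2)
    intro i
    linear_combination (hP1 i)/2 + (hD1 i)/2
  have hu2 : ∀ i, u2 i = (-p/2)/2 := by
    apply urec2 hodd u2 (-p/2)
    intro i
    have a1 := E1 i
    have a2 := E1' i
    have b1 := hP1 i
    have b2 := hP1 (i-2); simp only [I1, I2, I3, I4, I5] at b2
    linear_combination (a1 + a2)/4 - b1/4 - b2/4 + (hD2 i)/2
  refine ⟨p/4, fun i => ?_, fun i => ?_⟩
  · have := hu1 i; linear_combination this
  · have := hu2 i; linear_combination this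

end Solvers

end BCayAux



namespace BCayAux

open QuaternionGroup

variable {n : ℕ} [NeZero n]

lemma a_inv (i : ZMod (2*n)) : (QuaternionGroup.a i)⁻¹ = QuaternionGroup.a (-i) := rfl

lemma xa_inv (i : ZMod (2*n)) :
    (QuaternionGroup.xa i)⁻¹ = QuaternionGroup.xa ((n : ZMod (2*n)) + i) := rfl

lemma bcay_adj (S : Set (QuaternionGroup n)) (x y : QuaternionGroup n) (bx by' : Bool) :
    (BCay (QuaternionGroup n) S).Adj (x, bx) (y, by') ↔
      ((bx = false ∧ by' = true ∧ ∃ s ∈ S, y = s * x) ∨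
       (by' = false ∧ bx = true ∧ ∃ s ∈ S, x = s * y)) := by
  show (SimpleGraph.fromRel _).Adj _ _ ↔ _
  rw [SimpleGraph.fromRel_adj]
  constructor
  · rintro ⟨-, h | h⟩
    · exact Or.inl h
    · exact Or.inr h
  · rintro (⟨h1, h2, h3⟩ | ⟨h1, h2, h3⟩)
    · refine ⟨?_, Or.inl ⟨h1, h2, h3⟩⟩
      intro hc
      have h4 := congrArg Prod.snd hc
      simp only at h4
      rw [h1, h2] at h4
      exact absurd h4 (by simp)
    · refine ⟨?_, Or.inr ⟨h1, h2, h3⟩⟩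
      intro hc
      have h4 := congrArg Prod.snd hc
      simp only at h4
      rw [h1, h2] at h4
      exact absurd h4 (by simp)

lemma bcay_entry_pos (S : Set (QuaternionGroup n)) (p q : QuaternionGroup n × Bool)
    (h : (BCay (QuaternionGroup n) S).Adj p q) : (bcayAdjMatrix n S) p q = 1 := by
  letI := Classical.decRel (BCay (QuaternionGroup n) S).Adj
  show (SimpleGraph.adjMatrix ℂ _) p q = 1
  rw [SimpleGraph.adjMatrix_apply, if_pos h]

lemma bcay_entry_neg (S : Set (QuaternionGroup n)) (p q : QuaternionGroup n × Bool)
    (h : ¬ (BCay (QuaternionGroup n) S).Adj p q) : (bcayAdjMatrix n S) p q = 0 := by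
  letI := Classical.decRel (BCay (QuaternionGroup n) S).Adj
  show (SimpleGraph.adjMatrix ℂ _) p q = 0
  rw [SimpleGraph.adjMatrix_apply, if_neg h]

lemma bcay_herm (S : Set (QuaternionGroup n)) : (bcayAdjMatrix n S).IsHermitian := by
  rw [Matrix.IsHermitian]
  ext p q
  rw [Matrix.conjTranspose_apply]
  by_cases h : (BCay (QuaternionGroup n) S).Adj p q
  · rw [bcay_entry_pos _ _ _ h, bcay_entry_pos _ _ _ h.symm, star_one]
  · rw [bcay_entry_neg _ _ _ h, bcay_entry_neg _ _ _ (fun hc => h hc.symm), star_zero]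

lemma bcay_mulVec_false (s1 s2 s3 : QuaternionGroup n)
    (h12 : s1 ≠ s2) (h13 : s1 ≠ s3) (h23 : s2 ≠ s3)
    (g : QuaternionGroup n × Bool → ℂ) (x : QuaternionGroup n) :
    (bcayAdjMatrix n {s1, s2, s3}).mulVec g (x, false)
      = g (s1*x, true) + g (s2*x, true) + g (s3*x, true) := by
  classical
  have key : ∀ p : QuaternionGroup n × Bool,
      (bcayAdjMatrix n {s1,s2,s3}) (x,false) p * g p
        = if p ∈ ({(s1*x, true), (s2*x, true), (s3*x, true)} :
            Finset (QuaternionGroup n × Bool)) then g p else 0 := by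
    rintro ⟨y, b⟩
    by_cases hmem : (y, b) ∈ ({(s1*x, true), (s2*x, true), (s3*x, true)} :
        Finset (QuaternionGroup n × Bool))
    · rw [if_pos hmem]
      rw [bcay_entry_pos, one_mul]
      rw [bcay_adj]
      left
      simp only [Finset.mem_insert, Finset.mem_singleton, Prod.mk.injEq] at hmem
      rcases hmem with ⟨rfl, rfl⟩ | ⟨rfl, rfl⟩ | ⟨rfl, rfl⟩
      · exact ⟨rfl, rfl, s1, by simp, rfl⟩
      · exact ⟨rfl, rfl, s2, by simp, rfl⟩
      · exact ⟨rfl, rfl, s3, by simp, rfl⟩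
    · rw [if_neg hmem]
      rw [bcay_entry_neg, zero_mul]
      rw [bcay_adj]
      rintro (⟨-, hb, s, hs, rfl⟩ | ⟨-, hbx, -⟩)
      · apply hmem
        simp only [Finset.mem_insert, Finset.mem_singleton, Prod.mk.injEq]
        simp only [Set.mem_insert_iff, Set.mem_singleton_iff] at hs
        rcases hs with rfl | rfl | rfl
        · exact Or.inl ⟨rfl, hb⟩
        · exact Or.inr (Or.inl ⟨rfl, hb⟩)
        · exact Or.inr (Or.inr ⟨rfl, hb⟩)
      · simp at hbx
  have h12' : ((s1*x : QuaternionGroup n), true)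
      ∉ ({(s2*x, true), (s3*x, true)} : Finset (QuaternionGroup n × Bool)) := by
    simp only [Finset.mem_insert, Finset.mem_singleton, Prod.mk.injEq, not_or]
    exact ⟨fun h => h12 (mul_right_cancel h.1), fun h => h13 (mul_right_cancel h.1)⟩
  have h23' : ((s2*x : QuaternionGroup n), true)
      ∉ ({(s3*x, true)} : Finset (QuaternionGroup n × Bool)) := by
    simp only [Finset.mem_singleton, Prod.mk.injEq, not_and]
    exact fun h => absurd (mul_right_cancel h) h23
  calc (bcayAdjMatrix n {s1, s2, s3}).mulVec g (x, false)
      = ∑ p : QuaternionGroup n × Bool,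
          (bcayAdjMatrix n {s1,s2,s3}) (x,false) p * g p := by
        rw [Matrix.mulVec, dotProduct]
    _ = ∑ p : QuaternionGroup n × Bool,
          (if p ∈ ({(s1*x, true), (s2*x, true), (s3*x, true)} :
            Finset (QuaternionGroup n × Bool)) then g p else 0) :=
        Finset.sum_congr rfl (fun p _ => key p)
    _ = ∑ p ∈ (Finset.univ ∩ ({(s1*x, true), (s2*x, true), (s3*x, true)} :
            Finset (QuaternionGroup n × Bool))), g p := by rw [Finset.sum_ite_mem]
    _ = g (s1*x, true) + g (s2*x, true) + g (s3*x, true) := by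
        rw [Finset.univ_inter, Finset.sum_insert h12', Finset.sum_insert h23',
          Finset.sum_singleton, add_assoc]

lemma bcay_mulVec_true (s1 s2 s3 : QuaternionGroup n)
    (h12 : s1 ≠ s2) (h13 : s1 ≠ s3) (h23 : s2 ≠ s3)
    (g : QuaternionGroup n × Bool → ℂ) (x : QuaternionGroup n) :
    (bcayAdjMatrix n {s1, s2, s3}).mulVec g (x, true)
      = g (s1⁻¹*x, false) + g (s2⁻¹*x, false) + g (s3⁻¹*x, false) := by
  classical
  have key : ∀ p : QuaternionGroup n × Bool,
      (bcayAdjMatrix n {s1,s2,s3}) (x,true) p * g p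
        = if p ∈ ({(s1⁻¹*x, false), (s2⁻¹*x, false), (s3⁻¹*x, false)} :
            Finset (QuaternionGroup n × Bool)) then g p else 0 := by
    rintro ⟨y, b⟩
    by_cases hmem : (y, b) ∈ ({(s1⁻¹*x, false), (s2⁻¹*x, false), (s3⁻¹*x, false)} :
        Finset (QuaternionGroup n × Bool))
    · rw [if_pos hmem]
      rw [bcay_entry_pos, one_mul]
      rw [bcay_adj]
      right
      simp only [Finset.mem_insert, Finset.mem_singleton, Prod.mk.injEq] at hmem
      rcases hmem with ⟨rfl, rfl⟩ | ⟨rfl, rfl⟩ | ⟨rfl, rfl⟩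
      · exact ⟨rfl, rfl, s1, by simp, by rw [mul_inv_cancel_left]⟩
      · exact ⟨rfl, rfl, s2, by simp, by rw [mul_inv_cancel_left]⟩
      · exact ⟨rfl, rfl, s3, by simp, by rw [mul_inv_cancel_left]⟩
    · rw [if_neg hmem]
      rw [bcay_entry_neg, zero_mul]
      rw [bcay_adj]
      rintro (⟨hbx, -, -⟩ | ⟨hb, -, s, hs, hx⟩)
      · simp at hbx
      · apply hmem
        simp only [Finset.mem_insert, Finset.mem_singleton, Prod.mk.injEq]
        simp only [Set.mem_insert_iff, Set.mem_singleton_iff] at hs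
        have hy : y = s⁻¹ * x := by rw [hx, inv_mul_cancel_left]
        rcases hs with rfl | rfl | rfl
        · exact Or.inl ⟨hy, hb⟩
        · exact Or.inr (Or.inl ⟨hy, hb⟩)
        · exact Or.inr (Or.inr ⟨hy, hb⟩)
  have h12i : s1⁻¹ ≠ s2⁻¹ := fun h => h12 (inv_injective h)
  have h13i : s1⁻¹ ≠ s3⁻¹ := fun h => h13 (inv_injective h)
  have h23i : s2⁻¹ ≠ s3⁻¹ := fun h => h23 (inv_injective h)
  have h12' : ((s1⁻¹*x : QuaternionGroup n), false)
      ∉ ({(s2⁻¹*x, false), (s3⁻¹*x, false)} : Finset (QuaternionGroup n × Bool)) := by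
    simp only [Finset.mem_insert, Finset.mem_singleton, Prod.mk.injEq, not_or]
    exact ⟨fun h => h12i (mul_right_cancel h.1), fun h => h13i (mul_right_cancel h.1)⟩
  have h23' : ((s2⁻¹*x : QuaternionGroup n), false)
      ∉ ({(s3⁻¹*x, false)} : Finset (QuaternionGroup n × Bool)) := by
    simp only [Finset.mem_singleton, Prod.mk.injEq, not_and]
    exact fun h => absurd (mul_right_cancel h) h23i
  calc (bcayAdjMatrix n {s1, s2, s3}).mulVec g (x, true)
      = ∑ p : QuaternionGroup n × Bool,
          (bcayAdjMatrix n {s1,s2,s3}) (x,true) p * g p := by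
        rw [Matrix.mulVec, dotProduct]
    _ = ∑ p : QuaternionGroup n × Bool,
          (if p ∈ ({(s1⁻¹*x, false), (s2⁻¹*x, false), (s3⁻¹*x, false)} :
            Finset (QuaternionGroup n × Bool)) then g p else 0) :=
        Finset.sum_congr rfl (fun p _ => key p)
    _ = ∑ p ∈ (Finset.univ ∩ ({(s1⁻¹*x, false), (s2⁻¹*x, false), (s3⁻¹*x, false)} :
            Finset (QuaternionGroup n × Bool))), g p := by rw [Finset.sum_ite_mem]
    _ = g (s1⁻¹*x, false) + g (s2⁻¹*x, false) + g (s3⁻¹*x, false) := by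
        rw [Finset.univ_inter, Finset.sum_insert h12', Finset.sum_insert h23',
          Finset.sum_singleton, add_assoc]

lemma mem_ker_iff (S : Set (QuaternionGroup n)) (g : QuaternionGroup n × Bool → ℂ) :
    g ∈ LinearMap.ker (Matrix.toLin' (bcayAdjMatrix n S - 1))
      ↔ ∀ p, (bcayAdjMatrix n S).mulVec g p = g p := by
  rw [LinearMap.mem_ker, Matrix.toLin'_apply, Matrix.sub_mulVec, Matrix.one_mulVec]
  rw [sub_eq_zero, funext_iff]

/-- first basis vector -/
noncomputable def ve1 (n : ℕ) : QuaternionGroup n × Bool → ℂ :=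
  fun p => match p with
  | (QuaternionGroup.a i, false) => qchi n i
  | (QuaternionGroup.xa i, true) => qchi n i
  | _ => 0

/-- second basis vector -/
noncomputable def ve2 (n : ℕ) : QuaternionGroup n × Bool → ℂ :=
  fun p => match p with
  | (QuaternionGroup.xa i, false) => qchi n i
  | (QuaternionGroup.a i, true) => -qchi n i
  | _ => 0

/-- third basis vector -/
noncomputable def ve3 (n : ℕ) : QuaternionGroup n × Bool → ℂ :=
  fun p => match p with
  | (QuaternionGroup.a _, _) => 1
  | (QuaternionGroup.xa _, _) => -1

lemma ve1_af (i : ZMod (2*n)) : ve1 n (.a i, false) = qchi n i := rfl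
lemma ve1_xf (i : ZMod (2*n)) : ve1 n (.xa i, false) = 0 := rfl
lemma ve1_at (i : ZMod (2*n)) : ve1 n (.a i, true) = 0 := rfl
lemma ve1_xt (i : ZMod (2*n)) : ve1 n (.xa i, true) = qchi n i := rfl
lemma ve2_af (i : ZMod (2*n)) : ve2 n (.a i, false) = 0 := rfl
lemma ve2_xf (i : ZMod (2*n)) : ve2 n (.xa i, false) = qchi n i := rfl
lemma ve2_at (i : ZMod (2*n)) : ve2 n (.a i, true) = -qchi n i := rfl
lemma ve2_xt (i : ZMod (2*n)) : ve2 n (.xa i, true) = 0 := rfl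
lemma ve3_a (i : ZMod (2*n)) (b : Bool) : ve3 n (.a i, b) = 1 := rfl
lemma ve3_x (i : ZMod (2*n)) (b : Bool) : ve3 n (.xa i, b) = -1 := rfl

end BCayAux

set_option maxHeartbeats 1000000

open BCayAux QuaternionGroup Matrix Module in
theorem stmt_12 (n : ℕ) [NeZero n] (hn : 2 ≤ n) (hodd : Odd n) :
    (bcayAdjMatrix n {1, QuaternionGroup.a 1, QuaternionGroup.xa 0}).charpoly.rootMultiplicity 1 = 3 ∧
    (bcayAdjMatrix n {1, QuaternionGroup.a 2, QuaternionGroup.xa 0}).charpoly.rootMultiplicity 1 = 1 := by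
  haveI : Fact (1 < 2*n) := ⟨by omega⟩
  have d13 : (1 : QuaternionGroup n) ≠ xa 0 := by
    rw [one_def]; exact fun h => by cases h
  have d12 : (1 : QuaternionGroup n) ≠ a 1 := by
    rw [one_def]
    intro h
    injection h with h'
    exact zero_ne_one h'
  have d23 : (a 1 : QuaternionGroup n) ≠ xa 0 := fun h => by cases h
  have h2ne : ((2:ℕ) : ZMod (2*n)) ≠ 0 := by
    intro h
    have hv := congrArg ZMod.val h
    rw [ZMod.val_cast_of_lt (by omega), ZMod.val_zero] at hv
    omega
  have d12' : (1 : QuaternionGroup n) ≠ a 2 := by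
    rw [one_def]
    intro h
    injection h with h'
    apply h2ne
    rw [Nat.cast_ofNat]
    exact h'.symm
  have d23' : (a 2 : QuaternionGroup n) ≠ xa 0 := fun h => by cases h
  constructor
  · -- First bi-Cayley graph: multiplicity 3
    rw [herm_mult_one _ (bcay_herm _)]
    have hker : LinearMap.ker (Matrix.toLin' (bcayAdjMatrix n {1, a 1, xa 0} - 1))
        = Submodule.span ℂ (Set.range ![ve1 n, ve2 n, ve3 n]) := by
      apply le_antisymm
      · intro g hg
        rw [mem_ker_iff] at hg
        have K1 : ∀ i : ZMod (2*n),
            g (.a i, true) + g (.a (i+1), true) + g (.xa i, true) = g (.a i, false) := by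
          intro i
          have h := hg (.a i, false)
          rw [bcay_mulVec_false 1 (a 1) (xa 0) d12 d13 d23 g (a i)] at h
          rw [one_mul, a_mul_a, xa_mul_a, zero_add,
            show (1:ZMod (2*n)) + i = i + 1 from by ring] at h
          exact h
        have K2 : ∀ i : ZMod (2*n),
            g (.xa i, true) + g (.xa (i-1), true)
              + g (.a (i + (n:ZMod (2*n))), true) = g (.xa i, false) := by
          intro i
          have h := hg (.xa i, false)
          rw [bcay_mulVec_false 1 (a 1) (xa 0) d12 d13 d23 g (xa i)] at h
          rw [one_mul, a_mul_xa, xa_mul_xa,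
            show ((n:ZMod (2*n)) + i - 0 : ZMod (2*n)) = i + (n:ZMod (2*n)) from by ring] at h
          exact h
        have K3 : ∀ i : ZMod (2*n),
            g (.a i, false) + g (.a (i-1), false)
              + g (.xa (i + (n:ZMod (2*n))), false) = g (.a i, true) := by
          intro i
          have h := hg (.a i, true)
          rw [bcay_mulVec_true 1 (a 1) (xa 0) d12 d13 d23 g (a i)] at h
          rw [inv_one, one_mul, a_inv, xa_inv, a_mul_a, xa_mul_a,
            show (-1 + i : ZMod (2*n)) = i - 1 from by ring,
            show ((n:ZMod (2*n)) + 0 + i : ZMod (2*n)) = i + (n:ZMod (2*n)) from by ring] at h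
          exact h
        have K4 : ∀ i : ZMod (2*n),
            g (.xa i, false) + g (.xa (i+1), false) + g (.a i, false) = g (.xa i, true) := by
          intro i
          have h := hg (.xa i, true)
          rw [bcay_mulVec_true 1 (a 1) (xa 0) d12 d13 d23 g (xa i)] at h
          rw [inv_one, one_mul, a_inv, xa_inv, a_mul_xa, xa_mul_xa,
            show (i - (-1) : ZMod (2*n)) = i + 1 from by ring,
            show ((n:ZMod (2*n)) + i - ((n:ZMod (2*n)) + 0) : ZMod (2*n)) = i from by ring] at h
          exact h
        have E1 : ∀ i : ZMod (2*n),
            g (.a (i-1), false) + 2*g (.a i, false) + g (.a (i+1), false)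
            + g (.xa i, false) + g (.xa (i+1), false) + g (.xa (i + (n:ZMod (2*n))), false)
            + g (.xa (i + (n:ZMod (2*n)) + 1), false) = 0 := by
          intro i
          have k1 := K1 i
          have k3 := K3 i
          have k3' := K3 (i+1)
          rw [show (i+1-1 : ZMod (2*n)) = i from by ring,
            show (i+1+(n:ZMod (2*n)) : ZMod (2*n)) = i + (n:ZMod (2*n)) + 1 from by ring] at k3'
          have k4 := K4 i
          linear_combination k1 + k3 + k3' + k4
        have E2 : ∀ i : ZMod (2*n),
            2*g (.xa i, false) + g (.xa (i+1), false) + g (.xa (i-1), false)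
            + g (.a i, false) + g (.a (i-1), false) + g (.a (i + (n:ZMod (2*n))), false)
            + g (.a (i + (n:ZMod (2*n)) - 1), false) = 0 := by
          intro i
          have k2 := K2 i
          have k4 := K4 i
          have k4' := K4 (i-1)
          rw [show (i-1+1 : ZMod (2*n)) = i from by ring] at k4'
          have k3 := K3 (i + (n:ZMod (2*n)))
          rw [show (i + (n:ZMod (2*n)) + (n:ZMod (2*n)) : ZMod (2*n)) = i from by
              rw [add_assoc, hnn, add_zero]] at k3
          linear_combination k2 + k4 + k4' + k3
        obtain ⟨A, B, C, hu1, hu2⟩ := case1_solve hodd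
          (fun i => g (.a i, false)) (fun i => g (.xa i, false)) E1 E2
        have hu1' : ∀ i : ZMod (2*n), g (.a i, false) = A * qchi n i + C := hu1
        have hu2' : ∀ i : ZMod (2*n), g (.xa i, false) = B * qchi n i - C := hu2
        have hw1 : ∀ i : ZMod (2*n), g (.a i, true) = -B * qchi n i + C := by
          intro i
          rw [← K3 i, hu1' i, hu1' (i-1), hu2' (i + (n:ZMod (2*n))), qchi_sub_one,
            qchi_add_n hodd]
          ring
        have hw2 : ∀ i : ZMod (2*n), g (.xa i, true) = A * qchi n i - C := by
          intro i
          rw [← K4 i, hu2' i, hu2' (i+1), hu1' i, qchi_add_one]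
          ring
        have hcomb : g = A • ve1 n + B • ve2 n + C • ve3 n := by
          funext p
          obtain ⟨z, b⟩ := p
          simp only [Pi.add_apply, Pi.smul_apply, smul_eq_mul]
          rcases z with i | i <;> rcases b
          · rw [ve1_af, ve2_af, ve3_a, hu1' i]; ring
          · rw [ve1_at, ve2_at, ve3_a, hw1 i]; ring
          · rw [ve1_xf, ve2_xf, ve3_x, hu2' i]; ring
          · rw [ve1_xt, ve2_xt, ve3_x, hw2 i]; ring
        rw [hcomb]
        refine Submodule.add_mem _ (Submodule.add_mem _ ?_ ?_) ?_
        · exact Submodule.smul_mem _ _ (Submodule.subset_span ⟨0, rfl⟩)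
        · exact Submodule.smul_mem _ _ (Submodule.subset_span ⟨1, rfl⟩)
        · exact Submodule.smul_mem _ _ (Submodule.subset_span ⟨2, rfl⟩)
      · rw [Submodule.span_le]
        have hm1 : ve1 n ∈ LinearMap.ker (Matrix.toLin' (bcayAdjMatrix n {1, a 1, xa 0} - 1)) := by
          rw [mem_ker_iff]
          rintro ⟨z, b⟩
          rcases z with i | i <;> rcases b
          · rw [bcay_mulVec_false 1 (a 1) (xa 0) d12 d13 d23 (ve1 n) (a i),
              one_mul, a_mul_a, xa_mul_a, zero_add, ve1_at, ve1_at, ve1_xt, ve1_af]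
            ring
          · rw [bcay_mulVec_true 1 (a 1) (xa 0) d12 d13 d23 (ve1 n) (a i),
              inv_one, one_mul, a_inv, xa_inv, a_mul_a, xa_mul_a, ve1_af, ve1_af, ve1_xf, ve1_at,
              show (-1 + i : ZMod (2*n)) = i - 1 from by ring, qchi_sub_one]
            ring
          · rw [bcay_mulVec_false 1 (a 1) (xa 0) d12 d13 d23 (ve1 n) (xa i),
              one_mul, a_mul_xa, xa_mul_xa, ve1_xt, ve1_xt, ve1_at, ve1_xf, qchi_sub_one]
            ring
          · rw [bcay_mulVec_true 1 (a 1) (xa 0) d12 d13 d23 (ve1 n) (xa i),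
              inv_one, one_mul, a_inv, xa_inv, a_mul_xa, xa_mul_xa, ve1_xf, ve1_xf, ve1_af, ve1_xt,
              show ((n:ZMod (2*n)) + i - ((n:ZMod (2*n)) + 0) : ZMod (2*n)) = i from by ring]
            ring
        have hm2 : ve2 n ∈ LinearMap.ker (Matrix.toLin' (bcayAdjMatrix n {1, a 1, xa 0} - 1)) := by
          rw [mem_ker_iff]
          rintro ⟨z, b⟩
          rcases z with i | i <;> rcases b
          · rw [bcay_mulVec_false 1 (a 1) (xa 0) d12 d13 d23 (ve2 n) (a i),
              one_mul, a_mul_a, xa_mul_a, zero_add, ve2_at, ve2_at, ve2_xt, ve2_af,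
              show (1 + i : ZMod (2*n)) = i + 1 from by ring, qchi_add_one]
            ring
          · rw [bcay_mulVec_true 1 (a 1) (xa 0) d12 d13 d23 (ve2 n) (a i),
              inv_one, one_mul, a_inv, xa_inv, a_mul_a, xa_mul_a, ve2_af, ve2_af, ve2_xf, ve2_at,
              show ((n:ZMod (2*n)) + 0 + i : ZMod (2*n)) = i + (n:ZMod (2*n)) from by ring,
              qchi_add_n hodd]
            ring
          · rw [bcay_mulVec_false 1 (a 1) (xa 0) d12 d13 d23 (ve2 n) (xa i),
              one_mul, a_mul_xa, xa_mul_xa, ve2_xt, ve2_xt, ve2_at, ve2_xf,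
              show ((n:ZMod (2*n)) + i - 0 : ZMod (2*n)) = i + (n:ZMod (2*n)) from by ring,
              qchi_add_n hodd]
            ring
          · rw [bcay_mulVec_true 1 (a 1) (xa 0) d12 d13 d23 (ve2 n) (xa i),
              inv_one, one_mul, a_inv, xa_inv, a_mul_xa, xa_mul_xa, ve2_xf, ve2_xf, ve2_af, ve2_xt,
              show (i - (-1) : ZMod (2*n)) = i + 1 from by ring, qchi_add_one]
            ring
        have hm3 : ve3 n ∈ LinearMap.ker (Matrix.toLin' (bcayAdjMatrix n {1, a 1, xa 0} - 1)) := by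
          rw [mem_ker_iff]
          rintro ⟨z, b⟩
          rcases z with i | i <;> rcases b
          · rw [bcay_mulVec_false 1 (a 1) (xa 0) d12 d13 d23 (ve3 n) (a i),
              one_mul, a_mul_a, xa_mul_a, ve3_a, ve3_a, ve3_x, ve3_a]
            ring
          · rw [bcay_mulVec_true 1 (a 1) (xa 0) d12 d13 d23 (ve3 n) (a i),
              inv_one, one_mul, a_inv, xa_inv, a_mul_a, xa_mul_a, ve3_a, ve3_a, ve3_x, ve3_a]
            ring
          · rw [bcay_mulVec_false 1 (a 1) (xa 0) d12 d13 d23 (ve3 n) (xa i),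
              one_mul, a_mul_xa, xa_mul_xa, ve3_x, ve3_x, ve3_a, ve3_x]
            ring
          · rw [bcay_mulVec_true 1 (a 1) (xa 0) d12 d13 d23 (ve3 n) (xa i),
              inv_one, one_mul, a_inv, xa_inv, a_mul_xa, xa_mul_xa, ve3_x, ve3_x, ve3_a, ve3_x]
            ring
        rintro v ⟨j, rfl⟩
        fin_cases j
        · simpa using hm1
        · simpa using hm2
        · simpa using hm3
    rw [hker]
    have hLI : LinearIndependent ℂ ![ve1 n, ve2 n, ve3 n] := by
      rw [Fintype.linearIndependent_iff]
      intro c hc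
      have h1 := congrFun hc (QuaternionGroup.a 0, false)
      have h2 := congrFun hc (QuaternionGroup.a 1, false)
      have h3 := congrFun hc (QuaternionGroup.xa 0, false)
      simp only [Finset.sum_apply, Fin.sum_univ_three, Matrix.cons_val_zero,
        Matrix.cons_val_one, Matrix.head_cons, Matrix.cons_val_two, Matrix.tail_cons,
        Pi.smul_apply, smul_eq_mul, Pi.zero_apply] at h1 h2 h3
      rw [ve1_af, ve2_af, ve3_a, qchi_zero] at h1
      rw [ve1_af, ve2_af, ve3_a, qchi_one] at h2
      rw [ve1_xf, ve2_xf, ve3_x, qchi_zero] at h3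
      have e0 : c 0 = 0 := by linear_combination (h1 - h2)/2
      have e1 : c 1 = 0 := by linear_combination (h1 + h2)/2 + h3
      have e2 : c 2 = 0 := by linear_combination (h1 + h2)/2
      intro i
      fin_cases i
      · exact e0
      · exact e1
      · exact e2
    rw [finrank_span_eq_card hLI]
    simp
  · -- Second bi-Cayley graph: multiplicity 1
    rw [herm_mult_one _ (bcay_herm _)]
    have hker : LinearMap.ker (Matrix.toLin' (bcayAdjMatrix n {1, a 2, xa 0} - 1))
        = Submodule.span ℂ {ve3 n} := by
      apply le_antisymm
      · intro g hg
        rw [mem_ker_iff] at hg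
        have K1 : ∀ i : ZMod (2*n),
            g (.a i, true) + g (.a (i+2), true) + g (.xa i, true) = g (.a i, false) := by
          intro i
          have h := hg (.a i, false)
          rw [bcay_mulVec_false 1 (a 2) (xa 0) d12' d13 d23' g (a i)] at h
          rw [one_mul, a_mul_a, xa_mul_a, zero_add,
            show (2:ZMod (2*n)) + i = i + 2 from by ring] at h
          exact h
        have K2 : ∀ i : ZMod (2*n),
            g (.xa i, true) + g (.xa (i-2), true)
              + g (.a (i + (n:ZMod (2*n))), true) = g (.xa i, false) := by
          intro i
          have h := hg (.xa i, false)
          rw [bcay_mulVec_false 1 (a 2) (xa 0) d12' d13 d23' g (xa i)] at h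
          rw [one_mul, a_mul_xa, xa_mul_xa,
            show ((n:ZMod (2*n)) + i - 0 : ZMod (2*n)) = i + (n:ZMod (2*n)) from by ring] at h
          exact h
        have K3 : ∀ i : ZMod (2*n),
            g (.a i, false) + g (.a (i-2), false)
              + g (.xa (i + (n:ZMod (2*n))), false) = g (.a i, true) := by
          intro i
          have h := hg (.a i, true)
          rw [bcay_mulVec_true 1 (a 2) (xa 0) d12' d13 d23' g (a i)] at h
          rw [inv_one, one_mul, a_inv, xa_inv, a_mul_a, xa_mul_a,
            show (-2 + i : ZMod (2*n)) = i - 2 from by ring,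
            show ((n:ZMod (2*n)) + 0 + i : ZMod (2*n)) = i + (n:ZMod (2*n)) from by ring] at h
          exact h
        have K4 : ∀ i : ZMod (2*n),
            g (.xa i, false) + g (.xa (i+2), false) + g (.a i, false) = g (.xa i, true) := by
          intro i
          have h := hg (.xa i, true)
          rw [bcay_mulVec_true 1 (a 2) (xa 0) d12' d13 d23' g (xa i)] at h
          rw [inv_one, one_mul, a_inv, xa_inv, a_mul_xa, xa_mul_xa,
            show (i - (-2) : ZMod (2*n)) = i + 2 from by ring,
            show ((n:ZMod (2*n)) + i - ((n:ZMod (2*n)) + 0) : ZMod (2*n)) = i from by ring] at h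
          exact h
        have E1 : ∀ i : ZMod (2*n),
            g (.a (i-2), false) + 2*g (.a i, false) + g (.a (i+2), false)
            + g (.xa i, false) + g (.xa (i+2), false) + g (.xa (i + (n:ZMod (2*n))), false)
            + g (.xa (i + (n:ZMod (2*n)) + 2), false) = 0 := by
          intro i
          have k1 := K1 i
          have k3 := K3 i
          have k3' := K3 (i+2)
          rw [show (i+2-2 : ZMod (2*n)) = i from by ring,
            show (i+2+(n:ZMod (2*n)) : ZMod (2*n)) = i + (n:ZMod (2*n)) + 2 from by ring] at k3'
          have k4 := K4 i
          linear_combination k1 + k3 + k3' + k4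
        have E2 : ∀ i : ZMod (2*n),
            2*g (.xa i, false) + g (.xa (i+2), false) + g (.xa (i-2), false)
            + g (.a i, false) + g (.a (i-2), false) + g (.a (i + (n:ZMod (2*n))), false)
            + g (.a (i + (n:ZMod (2*n)) - 2), false) = 0 := by
          intro i
          have k2 := K2 i
          have k4 := K4 i
          have k4' := K4 (i-2)
          rw [show (i-2+2 : ZMod (2*n)) = i from by ring] at k4'
          have k3 := K3 (i + (n:ZMod (2*n)))
          rw [show (i + (n:ZMod (2*n)) + (n:ZMod (2*n)) : ZMod (2*n)) = i from by
              rw [add_assoc, hnn, add_zero]] at k3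
          linear_combination k2 + k4 + k4' + k3
        obtain ⟨C, hu1, hu2⟩ := case2_solve hodd
          (fun i => g (.a i, false)) (fun i => g (.xa i, false)) E1 E2
        have hu1' : ∀ i : ZMod (2*n), g (.a i, false) = C := hu1
        have hu2' : ∀ i : ZMod (2*n), g (.xa i, false) = -C := hu2
        have hw1 : ∀ i : ZMod (2*n), g (.a i, true) = C := by
          intro i
          rw [← K3 i, hu1' i, hu1' (i-2), hu2' (i + (n:ZMod (2*n)))]
          ring
        have hw2 : ∀ i : ZMod (2*n), g (.xa i, true) = -C := by
          intro i
          rw [← K4 i, hu2' i, hu2' (i+2), hu1' i]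
          ring
        have hcomb : g = C • ve3 n := by
          funext p
          obtain ⟨z, b⟩ := p
          simp only [Pi.smul_apply, smul_eq_mul]
          rcases z with i | i <;> rcases b
          · rw [ve3_a, hu1' i]; ring
          · rw [ve3_a, hw1 i]; ring
          · rw [ve3_x, hu2' i]; ring
          · rw [ve3_x, hw2 i]; ring
        rw [hcomb]
        exact Submodule.smul_mem _ _ (Submodule.mem_span_singleton_self _)
      · rw [Submodule.span_le, Set.singleton_subset_iff]
        rw [SetLike.mem_coe, mem_ker_iff]
        rintro ⟨z, b⟩
        rcases z with i | i <;> rcases b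
        · rw [bcay_mulVec_false 1 (a 2) (xa 0) d12' d13 d23' (ve3 n) (a i),
            one_mul, a_mul_a, xa_mul_a, ve3_a, ve3_a, ve3_x, ve3_a]
          ring
        · rw [bcay_mulVec_true 1 (a 2) (xa 0) d12' d13 d23' (ve3 n) (a i),
            inv_one, one_mul, a_inv, xa_inv, a_mul_a, xa_mul_a, ve3_a, ve3_a, ve3_x, ve3_a]
          ring
        · rw [bcay_mulVec_false 1 (a 2) (xa 0) d12' d13 d23' (ve3 n) (xa i),
            one_mul, a_mul_xa, xa_mul_xa, ve3_x, ve3_x, ve3_a, ve3_x]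
          ring
        · rw [bcay_mulVec_true 1 (a 2) (xa 0) d12' d13 d23' (ve3 n) (xa i),
            inv_one, one_mul, a_inv, xa_inv, a_mul_xa, xa_mul_xa, ve3_x, ve3_x, ve3_a, ve3_x]
          ring
    rw [hker]
    have hne : ve3 n ≠ 0 := by
      intro h
      have := congrFun h (QuaternionGroup.a 0, false)
      rw [ve3_a] at this
      simp at this
    rw [finrank_span_singleton hne]
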